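/- arXiv:2104.09328 — 5 statements merged into one kernel-verified Lean document; each statement's English description precedes it below -/
import Mathlib

section
/- Let $0 < B < 1$ and let $M$ be a positive integer. Then the equation $\tan(k_2(M+1)) = \frac{B \sin k_2}{B \cos k_2 - 1}$ has exactly one solution $k_2$ in each open interval $I_n := \left(\frac{\pi(n + 1/2)}{M+1}, \frac{\pi(n+1)}{M+1}\right)$, for $n = 0, 1, \ldots, M-1$. -/
/-!
On `I_n = frequencyInterval M n` the phase `k (M + 1)` lies in `(π (n + 1/2), π (n + 1))`, so
neither `cos (k (M + 1))` nor `sin (k (M + 1))` vanishes there, and clearing denominators turns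
the equation into `sin (k (M + 1)) = B sin (k M)`. Existence follows from the intermediate value
theorem, since `(-1)ⁿ (sin (k (M + 1)) - B sin (k M))` equals `1 - B cos k > 0` at the left end
of `I_n` and `-B sin k < 0` at the right end. Uniqueness: the ratio `sin (k M) / sin (k (M + 1))`
is strictly increasing wherever its denominator does not vanish in `(0, π)`, because the numerator
of its derivative is `M sin k - cos (k (M + 1)) sin (k M)`, positive by `|sin (M k)| ≤ M sin k`.
-/

open Real Set

def frequencyInterval (m n : ℕ) : Set ℝ :=
  Ioo (π * (n + 1 / 2) / (m + 1)) (π * (n + 1) / (m + 1))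

lemma abs_sin_nat_mul_le {x : ℝ} (hx : 0 ≤ sin x) (m : ℕ) : |sin (m * x)| ≤ m * sin x := by
  induction m with
  | zero => simp
  | succ m ih =>
    calc |sin ((m + 1 : ℕ) * x)| = |sin (m * x) * cos x + cos (m * x) * sin x| := by
          rw [Nat.cast_succ, add_one_mul, sin_add]
      _ ≤ |sin (m * x)| * |cos x| + |cos (m * x)| * sin x := by
          simpa only [abs_mul, abs_of_nonneg hx] using
            abs_add_le (sin (m * x) * cos x) (cos (m * x) * sin x)
      _ ≤ |sin (m * x)| * 1 + 1 * sin x := by gcongr <;> exact abs_cos_le_one _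
      _ ≤ (m + 1 : ℕ) * sin x := by push_cast; linarith

lemma sin_ne_zero_of_mem_Ioo_int_mul_pi {x : ℝ} {n : ℤ} (hx : x ∈ Ioo (n * π) ((n + 1) * π)) :
    sin x ≠ 0 := by
  rw [sin_ne_zero_iff]
  rintro j rfl
  have hnj : n < j := by exact_mod_cast (mul_lt_mul_iff_left₀ pi_pos).1 hx.1
  have hjn : j < n + 1 := by exact_mod_cast (mul_lt_mul_iff_left₀ pi_pos).1 hx.2
  omega

lemma tan_eq_div_iff_sin_eq_mul_sin_sub {B k y : ℝ} (hy : cos y ≠ 0) (hk : B * cos k - 1 ≠ 0) :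
    tan y = B * sin k / (B * cos k - 1) ↔ sin y = B * sin (y - k) := by
  rw [tan_eq_sin_div_cos, div_eq_div_iff hy hk, sin_sub]
  constructor <;> intro h <;> linear_combination -h

lemma hasDerivAt_sin_mul_div_sin_mul_succ (m : ℕ) {k : ℝ} (hk : sin (k * (m + 1)) ≠ 0) :
    HasDerivAt (fun k => sin (k * m) / sin (k * (m + 1)))
      ((m * sin k - cos (k * (m + 1)) * sin (k * m)) / sin (k * (m + 1)) ^ 2) k := by
  refine (((hasDerivAt_mul_const (m : ℝ)).sin).div
    ((hasDerivAt_mul_const ((m : ℝ) + 1)).sin) hk).congr_deriv ?_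
  have hsub : sin k = sin (k * (m + 1)) * cos (k * m) - cos (k * (m + 1)) * sin (k * m) := by
    rw [← sin_sub]; ring_nf
  rw [hsub]; ring

lemma strictMonoOn_sin_mul_div_sin_mul_succ {m : ℕ} (hm : 0 < m) {s : Set ℝ} (hs : Convex ℝ s)
    (hs_pi : s ⊆ Ioo 0 π) (hsin : ∀ k ∈ s, sin (k * (m + 1)) ≠ 0) :
    StrictMonoOn (fun k => sin (k * m) / sin (k * (m + 1))) s := by
  refine strictMonoOn_of_deriv_pos hs (fun k hk =>
    (hasDerivAt_sin_mul_div_sin_mul_succ m (hsin k hk)).continuousAt.continuousWithinAt) ?_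
  intro k hk
  have hks := interior_subset hk
  rw [(hasDerivAt_sin_mul_div_sin_mul_succ m (hsin k hks)).deriv]
  have hsink : 0 < sin k := sin_pos_of_pos_of_lt_pi (hs_pi hks).1 (hs_pi hks).2
  have hmsin : 0 < m * sin k := mul_pos (by exact_mod_cast hm) hsink
  have hcos : |cos (k * (m + 1))| < 1 := by
    rw [← sq_lt_one_iff_abs_lt_one]
    nlinarith [sin_sq_add_cos_sq (k * (m + 1)), sq_pos_of_ne_zero (hsin k hks)]
  have hnum : cos (k * (m + 1)) * sin (k * m) < m * sin k := by
    calc cos (k * (m + 1)) * sin (k * m) ≤ |cos (k * (m + 1))| * |sin (k * m)| := by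
          rw [← abs_mul]; exact le_abs_self _
      _ ≤ |cos (k * (m + 1))| * (m * sin k) := by
          gcongr; rw [mul_comm]; exact abs_sin_nat_mul_le hsink.le m
      _ < 1 * (m * sin k) := by gcongr
      _ = m * sin k := one_mul _
  exact div_pos (by linarith) (sq_pos_of_ne_zero (hsin k hks))

section frequencyInterval

variable {m n : ℕ} {k : ℝ}

lemma mul_succ_mem_Ioo_of_mem_frequencyInterval (hk : k ∈ frequencyInterval m n) :
    k * (m + 1) ∈ Ioo (π * (n + 1 / 2)) (π * (n + 1)) := by
  have hm : (0 : ℝ) < m + 1 := by positivity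
  exact ⟨(div_lt_iff₀ hm).1 hk.1, (lt_div_iff₀ hm).1 hk.2⟩

lemma pi_mul_succ_div_succ_lt_pi (hn : n < m) : π * (n + 1) / (m + 1) < π := by
  rw [div_lt_iff₀ (by positivity)]
  exact mul_lt_mul_of_pos_left (by exact_mod_cast Nat.succ_lt_succ hn) pi_pos

lemma frequencyInterval_subset_Ioo_zero_pi (hn : n < m) : frequencyInterval m n ⊆ Ioo 0 π :=
  fun _ hk => ⟨lt_trans (by positivity) hk.1, hk.2.trans (pi_mul_succ_div_succ_lt_pi hn)⟩

lemma sin_mul_succ_ne_zero_of_mem_frequencyInterval (hk : k ∈ frequencyInterval m n) :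
    sin (k * (m + 1)) ≠ 0 := by
  have h := mul_succ_mem_Ioo_of_mem_frequencyInterval hk
  refine sin_ne_zero_of_mem_Ioo_int_mul_pi (n := n) ⟨?_, ?_⟩ <;> push_cast <;>
    linarith [h.1, h.2, pi_pos]

lemma cos_mul_succ_ne_zero_of_mem_frequencyInterval (hk : k ∈ frequencyInterval m n) :
    cos (k * (m + 1)) ≠ 0 := by
  have h := mul_succ_mem_Ioo_of_mem_frequencyInterval hk
  rw [← sin_add_pi_div_two]
  refine sin_ne_zero_of_mem_Ioo_int_mul_pi (n := n + 1) ⟨?_, ?_⟩ <;> push_cast <;>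
    linarith [h.1, h.2, pi_pos]

end frequencyInterval

lemma exists_mem_frequencyInterval_sin_mul_succ_eq {B : ℝ} (hB : 0 < B) (hB' : B < 1)
    {m n : ℕ} (hn : n < m) : ∃ k ∈ frequencyInterval m n, sin (k * (m + 1)) = B * sin (k * m) := by
  set a := π * (n + 1 / 2) / (m + 1)
  set b := π * (n + 1) / (m + 1)
  have hm : (m : ℝ) + 1 ≠ 0 := by positivity
  have hab : a < b := by simp only [a, b]; gcongr; linarith
  have hsin_b : 0 < sin b :=
    sin_pos_of_pos_of_lt_pi (by positivity) (pi_mul_succ_div_succ_lt_pi hn)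
  have hsign : ((-1 : ℝ) ^ n) * (-1) ^ n = 1 := by rw [← mul_pow]; norm_num
  set G : ℝ → ℝ := fun k => (-1) ^ n * (sin (k * (m + 1)) - B * sin (k * m))
  have hGa : G a = 1 - B * cos a := by
    have haN : a * (m + 1) = π / 2 + n * π := by rw [div_mul_cancel₀ _ hm]; ring
    have haM : a * m = (π / 2 - a) + n * π := by linear_combination haN
    simp only [G, haN, haM, sin_add_nat_mul_pi, sin_pi_div_two, sin_pi_div_two_sub]
    linear_combination (1 - B * cos a) * hsign
  have hGb : G b = -(B * sin b) := by
    have hbN : b * (m + 1) = (n + 1 : ℕ) * π := by rw [div_mul_cancel₀ _ hm]; push_cast; ring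
    have hbM : b * m = (n + 1 : ℕ) * π - b := by linear_combination hbN
    simp only [G]
    rw [hbN, hbM, sin_nat_mul_pi, sin_nat_mul_pi_sub, pow_succ]
    linear_combination (-(B * sin b)) * hsign
  have hG0 : (0 : ℝ) ∈ Ioo (G b) (G a) :=
    ⟨by rw [hGb]; nlinarith, by rw [hGa]; nlinarith [cos_le_one a]⟩
  obtain ⟨k, hk, hGk⟩ :=
    intermediate_value_Ioo' hab.le (by fun_prop : Continuous G).continuousOn hG0
  refine ⟨k, hk, ?_⟩
  have := (mul_eq_zero.1 hGk).resolve_left (pow_ne_zero n (by norm_num))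
  linarith

theorem unique_frequency_in_interval (B : ℝ) (hB : 0 < B) (hB' : B < 1)
    (M : ℕ) (hM : 0 < M) :
    ∀ n : ℕ, n < M →
      ∃! k2 : ℝ, k2 ∈ Set.Ioo (Real.pi * (n + 1/2) / (M + 1)) (Real.pi * (n + 1) / (M + 1)) ∧
        Real.tan (k2 * (M + 1)) = B * Real.sin k2 / (B * Real.cos k2 - 1) := by
  intro n hn
  have hequiv : ∀ k ∈ frequencyInterval M n, tan (k * (M + 1)) = B * sin k / (B * cos k - 1) ↔
      sin (k * (M + 1)) = B * sin (k * M) := fun k hk => by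
    rw [tan_eq_div_iff_sin_eq_mul_sin_sub (cos_mul_succ_ne_zero_of_mem_frequencyInterval hk)
      (by nlinarith [cos_le_one k] : B * cos k - 1 < 0).ne, show k * (M + 1) - k = k * M by ring]
  have hratio : ∀ k ∈ frequencyInterval M n, sin (k * (M + 1)) = B * sin (k * M) →
      sin (k * M) / sin (k * (M + 1)) = B⁻¹ := fun k hk hk_eq => by
    have hsin := sin_mul_succ_ne_zero_of_mem_frequencyInterval hk
    rw [hk_eq] at hsin ⊢
    exact div_mul_cancel_right₀ (right_ne_zero_of_mul hsin) B
  have hmono := strictMonoOn_sin_mul_div_sin_mul_succ hM (convex_Ioo _ _)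
    (frequencyInterval_subset_Ioo_zero_pi hn) fun _ => sin_mul_succ_ne_zero_of_mem_frequencyInterval
  obtain ⟨c, hc, hc_eq⟩ := exists_mem_frequencyInterval_sin_mul_succ_eq hB hB' hn
  refine ⟨c, ⟨hc, (hequiv c hc).2 hc_eq⟩, fun k ⟨hk, hk_eq⟩ => hmono.injOn hk hc ?_⟩
  simp only [hratio k hk ((hequiv k hk).1 hk_eq), hratio c hc hc_eq]
end

section
/- Let $B \in \mathbb{R}$, $M$ a positive integer, and $k_2 \in (0,\pi)$ with $\sin k_2 \neq 0$ satisfying $\sin(k_2(M+1)) = B \sin(k_2 M)$ and $B\cos(k_2 M) - \cos(k_2(M+1)) \neq 0$. Then $2\sum_{x=1}^{M} \sin^2(k_2 x) = \frac{B M \cos(k_2 M) - (M+1)\cos(k_2(M+1))}{B \cos(k_2 M) - \cos(k_2(M+1))}$. -/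
lemma sum_sin_sq_key (k2 : ℝ) (M : ℕ) :
    4 * Real.sin k2 * ∑ x ∈ Finset.Icc 1 M, Real.sin (k2 * x)^2 =
      (2 * M + 1) * Real.sin k2 - Real.sin ((2 * M + 1) * k2) := by
  induction M with
  | zero => simp
  | succ n ih =>
    rw [Finset.sum_Icc_succ_top (by omega : 1 ≤ n + 1)]
    push_cast at ih ⊢
    rw [show (2 * ((n:ℝ) + 1) + 1) * k2 = 2 * (k2 * ((n:ℝ) + 1)) + k2 by ring,
      Real.sin_add, Real.sin_two_mul, Real.cos_two_mul]
    rw [show (2 * (n:ℝ) + 1) * k2 = 2 * (k2 * ((n:ℝ) + 1)) - k2 by ring,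
      Real.sin_sub, Real.sin_two_mul, Real.cos_two_mul] at ih
    linear_combination ih + 4 * Real.sin k2 * Real.sin_sq_add_cos_sq (k2 * ((n:ℝ) + 1))

theorem normalization_identity (B : ℝ) (M : ℕ) (hM : 0 < M) (k2 : ℝ)
    (hk2 : k2 ∈ Set.Ioo 0 Real.pi) (hsin : Real.sin k2 ≠ 0)
    (hq : Real.sin (k2 * (M + 1)) = B * Real.sin (k2 * M))
    (hden : B * Real.cos (k2 * M) - Real.cos (k2 * (M + 1)) ≠ 0) :
    2 * ∑ x ∈ Finset.Icc 1 M, Real.sin (k2 * x)^2 =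
      (B * M * Real.cos (k2 * M) - (M + 1) * Real.cos (k2 * (M + 1))) /
        (B * Real.cos (k2 * M) - Real.cos (k2 * (M + 1))) := by
  have key := sum_sin_sq_key k2 M
  have e1 : Real.sin ((2 * (M:ℝ) + 1) * k2)
      = Real.sin (k2 * M) * Real.cos (k2 * (M + 1))
        + Real.cos (k2 * M) * Real.sin (k2 * (M + 1)) := by
    rw [← Real.sin_add]; ring_nf
  have e2 : Real.sin k2
      = Real.sin (k2 * (M + 1)) * Real.cos (k2 * M)
        - Real.cos (k2 * (M + 1)) * Real.sin (k2 * M) := by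
    rw [← Real.sin_sub]; ring_nf
  rw [hq] at e1 e2
  set D := B * Real.cos (k2 * M) - Real.cos (k2 * (M + 1)) with hD
  set N := B * (M:ℝ) * Real.cos (k2 * M) - ((M:ℝ) + 1) * Real.cos (k2 * (M + 1)) with hN
  rw [eq_div_iff hden]
  have hgoal : ((2 * (M:ℝ) + 1) * Real.sin k2 - Real.sin ((2 * (M:ℝ) + 1) * k2)) * D
      = 2 * Real.sin k2 * N := by
    linear_combination ((2 * (M:ℝ) + 1) * D - 2 * N) * e2 - D * e1
  have hfin : (2 * Real.sin k2) * (2 * (∑ x ∈ Finset.Icc 1 M, Real.sin (k2 * x)^2) * D)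
      = (2 * Real.sin k2) * N := by
    linear_combination D * key + hgoal
  exact mul_left_cancel₀ (by simpa using hsin) hfin
end

section
/- Let $B \in (0,1)$, $M$ a positive integer, and $k_2 \in (0,\pi)$ satisfying $\sin(k_2(M+1)) = B \sin(k_2 M)$. Then $N_M := 2\sum_{x=1}^M \sin^2(k_2 x)$ satisfies $N_M \geq M$. -/
open Real

lemma sum_cos_mul_sin (k : ℝ) (M : ℕ) :
    (∑ x ∈ Finset.Icc 1 M, Real.cos (2 * k * x)) * Real.sin k
      = Real.sin (k * M) * Real.cos (k * (M + 1)) := by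
  induction M with
  | zero => simp
  | succ n ih =>
    rw [Finset.sum_Icc_succ_top (by omega)]
    push_cast
    have e1 : k * ((n : ℝ) + 1) = k * n + k := by ring
    have e2 : 2 * k * ((n : ℝ) + 1) = (k * n + k) + (k * n + k) := by ring
    have e3 : k * ((n : ℝ) + 1 + 1) = (k * n + k) + k := by ring
    rw [add_mul, ih, e1, e2, e3]
    simp only [Real.cos_add, Real.sin_add]
    linear_combination (Real.sin (k * n) ^ 2 * Real.sin k -
      Real.sin (k * n) * Real.cos (k * n) * Real.cos k) * Real.sin_sq_add_cos_sq k

theorem normalization_lower_bound (B : ℝ) (hB : 0 < B) (hB' : B < 1)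
    (M : ℕ) (hM : 0 < M) (k2 : ℝ) (hk2 : k2 ∈ Set.Ioo 0 Real.pi)
    (hq : Real.sin (k2 * (M + 1)) = B * Real.sin (k2 * M)) :
    (M : ℝ) ≤ 2 * ∑ x ∈ Finset.Icc 1 M, Real.sin (k2 * x)^2 := by
  obtain ⟨hk0, hkpi⟩ := hk2
  have hs : 0 < Real.sin k2 := Real.sin_pos_of_pos_of_lt_pi hk0 hkpi
  -- rewrite sin² via double angle
  have hsq : ∀ x : ℕ, Real.sin (k2 * x) ^ 2 = 1 / 2 - Real.cos (2 * k2 * x) / 2 := by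
    intro x
    rw [Real.sin_sq_eq_half_sub]
    ring_nf
  have hsum : 2 * ∑ x ∈ Finset.Icc 1 M, Real.sin (k2 * x) ^ 2
      = (M : ℝ) - ∑ x ∈ Finset.Icc 1 M, Real.cos (2 * k2 * x) := by
    rw [Finset.sum_congr rfl fun x _ => hsq x, Finset.mul_sum]
    have : ∀ x ∈ Finset.Icc 1 M, 2 * (1 / 2 - Real.cos (2 * k2 * x) / 2)
        = 1 - Real.cos (2 * k2 * x) := fun x _ => by ring
    rw [Finset.sum_congr rfl this, Finset.sum_sub_distrib, Finset.sum_const,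
      Nat.card_Icc, Nat.add_sub_cancel, nsmul_eq_mul, mul_one]
  rw [hsum]
  have hkey := sum_cos_mul_sin k2 M
  -- from hq : cos(k2 M) sin k2 = (B - cos k2) sin(k2 M)
  have hq' : Real.cos (k2 * M) * Real.sin k2 = (B - Real.cos k2) * Real.sin (k2 * M) := by
    have : k2 * ((M : ℝ) + 1) = k2 * M + k2 := by ring
    rw [this, Real.sin_add] at hq
    linarith
  have hC : Real.cos (k2 * ((M : ℝ) + 1)) = Real.cos (k2 * M) * Real.cos k2
      - Real.sin (k2 * M) * Real.sin k2 := by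
    have : k2 * ((M : ℝ) + 1) = k2 * M + k2 := by ring
    rw [this, Real.cos_add]
  have hpyth := Real.sin_sq_add_cos_sq k2
  have hprod : Real.sin (k2 * M) * Real.cos (k2 * ((M : ℝ) + 1)) * Real.sin k2
      = Real.sin (k2 * M) ^ 2 * (B * Real.cos k2 - 1) := by
    rw [hC]
    linear_combination (Real.sin (k2 * M) * Real.cos k2) * hq' - Real.sin (k2 * M) ^ 2 * hpyth
  have hBc : B * Real.cos k2 - 1 ≤ 0 := by
    nlinarith [Real.cos_le_one k2]
  have hle : Real.sin (k2 * M) * Real.cos (k2 * ((M : ℝ) + 1)) ≤ 0 := by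
    nlinarith [hprod, hBc, sq_nonneg (Real.sin (k2 * M)), hs]
  have : (∑ x ∈ Finset.Icc 1 M, Real.cos (2 * k2 * x)) ≤ 0 := by
    nlinarith [hkey, hle]
  linarith
end

section
/- Let $0 < r < R$ and $0 < r' < R'$. There exists a biholomorphic map from the annulus $\{z \in \mathbb{C} : r < |z| < R\}$ onto the annulus $\{z \in \mathbb{C} : r' < |z| < R'\}$ if and only if $R/r = R'/r'$. -/
/-!
Scaling reduces the theorem to annuli `A(1, ρ)` and `A(1, ρ')`. A biholomorphism `f` between them
is proper, so by connectedness of thin collars it sends each boundary circle to a boundary circle,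
and to different ones since it is onto; after replacing `f` by `ρ' / f` the inner circle goes to
the inner circle. In the coordinate `z = exp w` the function `f (exp w) / exp (α w)`, with
`α = log ρ' / log ρ`, is bounded together with its inverse on the strip `0 < re w < log ρ`, and its
modulus tends to `1` on both edges, so by Phragmén–Lindelöf it is unimodular: `|f z| = |z| ^ α`.
A unimodular holomorphic function is constant, and the `2πi`-periodicity of `exp` then forces
`α ∈ ℤ`, so `ρ ≤ ρ'`. Symmetry gives `ρ = ρ'`.
-/

open Complex Filter Set Topology
open scoped Real

section Dichotomy

variable {X Y : Type*} {f : X → Y} {l : Filter X} {l₁ l₂ : Filter Y}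

lemma Filter.Tendsto.of_sup_of_eventually_notMem {V : Set Y} (h : Tendsto f l (l₁ ⊔ l₂))
    (hV : V ∈ l₂) (hfV : ∀ᶠ x in l, f x ∉ V) : Tendsto f l l₁ := fun S hS => mem_map.2 <| by
  filter_upwards [h (union_mem_sup hS hV), hfV] with x hxSV hxV
  exact hxSV.resolve_right hxV

theorem Filter.Tendsto.of_sup_of_isPreconnected [TopologicalSpace X] [TopologicalSpace Y]
    {s : Set X} {U V : Set Y} (hl : ∀ t ∈ l, ∃ c ∈ l, c ⊆ t ∧ IsPreconnected c) (hs : s ∈ l)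
    (hf : ContinuousOn f s) (hU : IsOpen U) (hV : IsOpen V) (hUV : Disjoint U V) (hU₁ : U ∈ l₁)
    (hV₂ : V ∈ l₂) (h : Tendsto f l (l₁ ⊔ l₂)) : Tendsto f l l₁ ∨ Tendsto f l l₂ := by
  obtain ⟨c, hc, hcs, hcconn⟩ := hl _ (inter_mem hs (h (union_mem_sup hU₁ hV₂)))
  rcases (hcconn.image f (hf.mono (hcs.trans inter_subset_left))).subset_or_subset hU hV hUV
    (image_subset_iff.2 fun x hx => (hcs hx).2) with hcU | hcV
  · exact .inl <| h.of_sup_of_eventually_notMem hV₂ <|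
      mem_of_superset hc fun x hx => disjoint_left.1 hUV (hcU ⟨x, hx, rfl⟩)
  · exact .inr <| (sup_comm l₁ l₂ ▸ h).of_sup_of_eventually_notMem hU₁ <|
      mem_of_superset hc fun x hx => disjoint_right.1 hUV (hcV ⟨x, hx, rfl⟩)

end Dichotomy

lemma convex_re_preimage_Ioo (a b : ℝ) : Convex ℝ (re ⁻¹' Ioo a b) :=
  (convex_Ioo a b).linear_preimage reLm

theorem norm_le_of_tendsto_strip {H : ℂ → ℂ} {a b C : ℝ}
    (hH : DifferentiableOn ℂ H (re ⁻¹' Ioo a b)) (hbdd : ∃ M, ∀ w ∈ re ⁻¹' Ioo a b, ‖H w‖ ≤ M)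
    (ha : Tendsto (‖H ·‖) (comap re (𝓝[>] a)) (𝓝 C))
    (hb : Tendsto (‖H ·‖) (comap re (𝓝[<] b)) (𝓝 C)) {w : ℂ} (hw : w ∈ re ⁻¹' Ioo a b) :
    ‖H w‖ ≤ C := by
  refine le_of_forall_gt_imp_ge_of_dense fun c hc => ?_
  obtain ⟨s₁, hH₁, hs₁⟩ := ((eventually_comap.1 (ha.eventually (gt_mem_nhds hc))).and
    (Ioo_mem_nhdsGT hw.1)).exists
  obtain ⟨s₂, hH₂, hs₂⟩ := ((eventually_comap.1 (hb.eventually (gt_mem_nhds hc))).and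
    (Ioo_mem_nhdsLT hw.2)).exists
  have hsub : re ⁻¹' Icc s₁ s₂ ⊆ re ⁻¹' Ioo a b := fun z hz =>
    ⟨hs₁.1.trans_le hz.1, hz.2.trans_lt hs₂.2⟩
  obtain ⟨M, hM⟩ := hbdd
  -- Phragmén–Lindelöf on the narrower strip `s₁ < re < s₂`, where boundedness is the growth
  -- condition with `c = B = 0`
  refine PhragmenLindelof.vertical_strip (a := s₁) (b := s₂) ?_ ?_
    (fun z hz => (hH₁ z hz).le) (fun z hz => (hH₂ z hz).le) hs₁.2.le hs₂.1.le
  · refine (hH.mono ?_).diffContOnCl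
    rwa [closure_preimage_re, closure_Ioo (hs₁.2.trans hs₂.1).ne]
  · refine ⟨0, by have := hs₁.2.trans hs₂.1; positivity, 0, .of_bound M ?_⟩
    filter_upwards [mem_inf_of_right (mem_principal_self _)] with z hz
    simpa using hM z (hsub (Ioo_subset_Icc_self hz))

theorem norm_eq_one_of_tendsto_strip {H : ℂ → ℂ} {a b : ℝ}
    (hH : DifferentiableOn ℂ H (re ⁻¹' Ioo a b)) (hH₀ : ∀ w ∈ re ⁻¹' Ioo a b, H w ≠ 0)
    (hbdd : ∃ M, ∀ w ∈ re ⁻¹' Ioo a b, ‖H w‖ ≤ M ∧ ‖H w‖⁻¹ ≤ M)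
    (ha : Tendsto (‖H ·‖) (comap re (𝓝[>] a)) (𝓝 1))
    (hb : Tendsto (‖H ·‖) (comap re (𝓝[<] b)) (𝓝 1)) {w : ℂ} (hw : w ∈ re ⁻¹' Ioo a b) :
    ‖H w‖ = 1 := by
  obtain ⟨M, hM⟩ := hbdd
  refine le_antisymm (norm_le_of_tendsto_strip hH ⟨M, fun w hw => (hM w hw).1⟩ ha hb hw) ?_
  have := norm_le_of_tendsto_strip (H := fun w => (H w)⁻¹) (hH.inv hH₀)
    ⟨M, fun w hw => by simpa using (hM w hw).2⟩ (by simpa using ha.inv₀ one_ne_zero)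
    (by simpa using hb.inv₀ one_ne_zero) hw
  rwa [norm_inv, inv_le_one₀ (norm_pos_iff.2 (hH₀ w hw))] at this

def annulus (a b : ℝ) : Set ℂ := {z : ℂ | a < ‖z‖ ∧ ‖z‖ < b}

lemma isOpen_annulus (a b : ℝ) : IsOpen (annulus a b) :=
  isOpen_Ioo.preimage continuous_norm

lemma exp_mem_annulus_iff {a b : ℝ} (ha : 0 < a) (hb : 0 < b) {w : ℂ} :
    exp w ∈ annulus a b ↔ w.re ∈ Ioo (Real.log a) (Real.log b) := by
  simp only [annulus, mem_ofPred_eq, norm_exp, mem_Ioo, Real.log_lt_iff_lt_exp ha,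
    Real.lt_log_iff_exp_lt hb]

lemma exp_image_annulus {a b : ℝ} (ha : 0 < a) (hb : 0 < b) :
    exp '' (re ⁻¹' Ioo (Real.log a) (Real.log b)) = annulus a b := by
  have hsub : annulus a b ⊆ range exp := by
    rw [range_exp]
    rintro z hz rfl
    exact (ha.trans hz.1).ne' norm_zero
  rw [← image_preimage_eq_of_subset hsub]
  congr 1
  ext w
  exact (exp_mem_annulus_iff ha hb).symm

lemma isPreconnected_annulus {a b : ℝ} (ha : 0 < a) : IsPreconnected (annulus a b) := by
  rcases le_or_gt b 0 with hb | hb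
  · convert isPreconnected_empty
    exact eq_empty_of_forall_notMem fun z hz => (ha.trans hz.1).not_ge (hz.2.le.trans hb)
  rw [← exp_image_annulus ha hb]
  exact (convex_re_preimage_Ioo _ _).isPreconnected.image _ continuous_exp.continuousOn

lemma norm_ofReal_mul {c : ℝ} (hc : 0 ≤ c) (z : ℂ) : ‖(c : ℂ) * z‖ = c * ‖z‖ := by
  rw [norm_mul, norm_real, Real.norm_of_nonneg hc]

lemma div_mem_annulus_one {ρ : ℝ} (hρ : 0 < ρ) {w : ℂ} (hw : w ∈ annulus 1 ρ) :
    (ρ : ℂ) / w ∈ annulus 1 ρ := by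
  have hw₀ : 0 < ‖w‖ := one_pos.trans hw.1
  simp only [annulus, mem_ofPred_eq, norm_div, norm_real, Real.norm_of_nonneg hρ.le,
    one_lt_div hw₀, div_lt_iff₀ hw₀] at hw ⊢
  constructor <;> nlinarith [hw.1, hw.2]

lemma differentiableOn_comp_exp_div_exp {f : ℂ → ℂ} {a b : ℝ} (ha : 0 < a) (hb : 0 < b)
    (hf : DifferentiableOn ℂ f (annulus a b)) (α : ℂ) :
    DifferentiableOn ℂ (fun w => f (exp w) / exp (α * w))
      (re ⁻¹' Ioo (Real.log a) (Real.log b)) :=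
  (hf.comp differentiable_exp.differentiableOn fun _ hw => (exp_mem_annulus_iff ha hb).2 hw).div
    (differentiable_exp.comp (differentiable_id.const_mul α)).differentiableOn
    fun _ _ => exp_ne_zero _

lemma norm_div_exp_ofReal_mul (u : ℂ) (α : ℝ) (w : ℂ) :
    ‖u / exp (α * w)‖ = ‖u‖ / Real.exp (α * w.re) := by
  rw [norm_div, norm_exp, re_ofReal_mul]

lemma tendsto_norm_comp_exp_div_exp {f : ℂ → ℂ} {l : Filter ℝ} {x c : ℝ} (α : ℝ)
    (hl : l ≤ 𝓝 x) (hf : Tendsto (fun w => ‖f (exp w)‖) (comap re l) (𝓝 c)) :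
    Tendsto (fun w => ‖f (exp w) / exp (α * w)‖) (comap re l) (𝓝 (c / Real.exp (α * x))) := by
  simp only [norm_div_exp_ofReal_mul]
  exact hf.div ((Real.continuous_exp.comp (continuous_const.mul continuous_id)).tendsto _
    |>.comp (tendsto_comap.mono_right hl)) (Real.exp_pos _).ne'

noncomputable def innerEdge (a : ℝ) : Filter ℂ := comap (‖·‖) (𝓝[>] a)

noncomputable def outerEdge (b : ℝ) : Filter ℂ := comap (‖·‖) (𝓝[<] b)

lemma innerEdge_basis (a : ℝ) : (innerEdge a).HasBasis (a < ·) (annulus a ·) :=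
  (nhdsGT_basis a).comap _

lemma outerEdge_basis (b : ℝ) : (outerEdge b).HasBasis (· < b) (annulus · b) :=
  (nhdsLT_basis b).comap _

lemma annulus_mem_innerEdge {a b : ℝ} (hab : a < b) : annulus a b ∈ innerEdge a :=
  (innerEdge_basis a).mem_of_mem hab

lemma annulus_mem_outerEdge {a b : ℝ} (hab : a < b) : annulus a b ∈ outerEdge b :=
  (outerEdge_basis b).mem_of_mem hab

lemma annulus_mem_innerEdge_sup_outerEdge {a b : ℝ} (hab : a < b) :
    annulus a b ∈ innerEdge a ⊔ outerEdge b :=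
  ⟨annulus_mem_innerEdge hab, annulus_mem_outerEdge hab⟩

lemma innerEdge_neBot {a : ℝ} (ha : 0 ≤ a) : (innerEdge a).NeBot :=
  NeBot.comap_of_range_mem inferInstance <| Complex.range_norm ▸
    mem_of_superset self_mem_nhdsWithin fun _ hx => ha.trans (le_of_lt hx)

lemma outerEdge_neBot {b : ℝ} (hb : 0 < b) : (outerEdge b).NeBot :=
  NeBot.comap_of_range_mem inferInstance <| Complex.range_norm ▸
    mem_nhdsWithin_of_mem_nhds (Ici_mem_nhds hb)

lemma disjoint_innerEdge_outerEdge {a b : ℝ} (hab : a < b) :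
    Disjoint (innerEdge a) (outerEdge b) :=
  disjoint_comap <| (disjoint_nhds_nhds.2 hab.ne).mono nhdsWithin_le_nhds nhdsWithin_le_nhds

lemma tendsto_norm_of_tendsto_innerEdge {α : Type*} {l : Filter α} {f : α → ℂ} {a : ℝ}
    (h : Tendsto f l (innerEdge a)) : Tendsto (‖f ·‖) l (𝓝 a) :=
  tendsto_comap_iff.1 (h.mono_right (comap_mono nhdsWithin_le_nhds))

lemma tendsto_norm_of_tendsto_outerEdge {α : Type*} {l : Filter α} {f : α → ℂ} {b : ℝ}
    (h : Tendsto f l (outerEdge b)) : Tendsto (‖f ·‖) l (𝓝 b) :=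
  tendsto_comap_iff.1 (h.mono_right (comap_mono nhdsWithin_le_nhds))

lemma tendsto_exp_comap_re_nhdsGT (x : ℝ) :
    Tendsto exp (comap re (𝓝[>] x)) (innerEdge (Real.exp x)) := by
  refine tendsto_comap_iff.2 ?_
  rw [show (‖·‖) ∘ exp = Real.exp ∘ re from funext norm_exp]
  exact ((Real.continuous_exp.tendsto x).inf (tendsto_principal_principal (s := Ioi x)
    (t := Ioi (Real.exp x)) |>.2 fun _ => Real.exp_lt_exp.2)).comp tendsto_comap

lemma tendsto_exp_comap_re_nhdsLT (x : ℝ) :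
    Tendsto exp (comap re (𝓝[<] x)) (outerEdge (Real.exp x)) := by
  refine tendsto_comap_iff.2 ?_
  rw [show (‖·‖) ∘ exp = Real.exp ∘ re from funext norm_exp]
  exact ((Real.continuous_exp.tendsto x).inf (tendsto_principal_principal (s := Iio x)
    (t := Iio (Real.exp x)) |>.2 fun _ => Real.exp_lt_exp.2)).comp tendsto_comap

lemma compl_mem_innerEdge_sup_outerEdge {a b : ℝ} {K : Set ℂ} (hK : IsCompact K)
    (hKab : K ⊆ annulus a b) : Kᶜ ∈ innerEdge a ⊔ outerEdge b := by
  have hopen : IsOpen ((‖·‖) '' K)ᶜ := (hK.image continuous_norm).isClosed.isOpen_compl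
  have hnhds : ∀ x ∉ (‖·‖) '' K, Kᶜ ∈ comap (‖·‖) (𝓝 x) := fun x hx =>
    mem_of_superset (preimage_mem_comap (hopen.mem_nhds hx)) fun z hz hzK => hz ⟨z, hzK, rfl⟩
  refine ⟨comap_mono nhdsWithin_le_nhds (hnhds a ?_), comap_mono nhdsWithin_le_nhds (hnhds b ?_)⟩
  · rintro ⟨z, hz, hza⟩
    exact (hKab hz).1.ne' hza
  · rintro ⟨z, hz, hzb⟩
    exact (hKab hz).2.ne hzb

lemma exists_isCompact_annulus_diff_subset {a b : ℝ} {S : Set ℂ}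
    (hS : S ∈ innerEdge a ⊔ outerEdge b) :
    ∃ K, IsCompact K ∧ K ⊆ annulus a b ∧ annulus a b \ K ⊆ S := by
  obtain ⟨⟨u, hau, hu⟩, ⟨l, hlb, hl⟩⟩ :=
    And.intro ((innerEdge_basis a).mem_iff.1 hS.1) ((outerEdge_basis b).mem_iff.1 hS.2)
  refine ⟨(‖·‖) ⁻¹' Icc u l, ?_, fun z hz => ⟨hau.trans_le hz.1, hz.2.trans_lt hlb⟩, ?_⟩
  · refine (isCompact_closedBall (0 : ℂ) l).of_isClosed_subset
      (isClosed_Icc.preimage continuous_norm) fun z hz => ?_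
    simpa using hz.2
  · rintro z ⟨⟨haz, hzb⟩, hzK⟩
    rcases lt_or_ge ‖z‖ u with hzu | hzu
    · exact hu ⟨haz, hzu⟩
    · exact hl ⟨lt_of_not_ge fun hzl => hzK ⟨hzu, hzl⟩, hzb⟩

theorem tendsto_innerEdge_sup_outerEdge_of_leftInvOn {f g : ℂ → ℂ} {a b a' b' : ℝ}
    (hab : a < b) (hg : ContinuousOn g (annulus a' b'))
    (hgm : MapsTo g (annulus a' b') (annulus a b)) (hfm : MapsTo f (annulus a b) (annulus a' b'))
    (hgf : LeftInvOn g f (annulus a b)) :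
    Tendsto f (innerEdge a ⊔ outerEdge b) (innerEdge a' ⊔ outerEdge b') := by
  intro S hS
  rw [mem_map]
  obtain ⟨K, hK, hKab, hS⟩ := exists_isCompact_annulus_diff_subset hS
  have hgK : (g '' K)ᶜ ∈ innerEdge a ⊔ outerEdge b := compl_mem_innerEdge_sup_outerEdge
    (hK.image_of_continuousOn (hg.mono hKab)) (hgm.mono_left hKab).image_subset
  filter_upwards [annulus_mem_innerEdge_sup_outerEdge hab, hgK] with z hz hzK
  exact hS ⟨hfm hz, fun hfz => hzK ⟨f z, hfz, hgf hz⟩⟩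

lemma innerEdge_exists_isPreconnected_subset {a : ℝ} (ha : 0 < a) :
    ∀ t ∈ innerEdge a, ∃ c ∈ innerEdge a, c ⊆ t ∧ IsPreconnected c := fun _ ht =>
  let ⟨_, hau, hu⟩ := (innerEdge_basis a).mem_iff.1 ht
  ⟨_, (innerEdge_basis a).mem_of_mem hau, hu, isPreconnected_annulus ha⟩

lemma outerEdge_exists_isPreconnected_subset {b : ℝ} (hb : 0 < b) :
    ∀ t ∈ outerEdge b, ∃ c ∈ outerEdge b, c ⊆ t ∧ IsPreconnected c := fun _ ht =>
  let ⟨l, hlb, hl⟩ := (outerEdge_basis b).mem_iff.1 ht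
  ⟨annulus (max l (b / 2)) b, (outerEdge_basis b).mem_of_mem (max_lt hlb (half_lt_self hb)),
    fun _ hz => hl ⟨(le_max_left _ _).trans_lt hz.1, hz.2⟩,
    isPreconnected_annulus (lt_max_of_lt_right (half_pos hb))⟩

theorem Filter.Tendsto.innerEdge_or_outerEdge {f : ℂ → ℂ} {l : Filter ℂ} {s : Set ℂ} {a b : ℝ}
    (hl : ∀ t ∈ l, ∃ c ∈ l, c ⊆ t ∧ IsPreconnected c) (hs : s ∈ l) (hf : ContinuousOn f s)
    (hab : a < b) (h : Tendsto f l (innerEdge a ⊔ outerEdge b)) :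
    Tendsto f l (innerEdge a) ∨ Tendsto f l (outerEdge b) :=
  h.of_sup_of_isPreconnected hl hs hf (isOpen_annulus a ((a + b) / 2)) (isOpen_annulus _ b)
    (disjoint_left.2 fun _ hz hz' => hz.2.not_gt hz'.1) (annulus_mem_innerEdge (by linarith))
    (annulus_mem_outerEdge (by linarith))

theorem exists_int_eq_of_norm_eq_rpow {f : ℂ → ℂ} {a b α : ℝ} (ha : 0 < a) (hab : a < b)
    (hf : DifferentiableOn ℂ f (annulus a b)) (hnorm : ∀ z ∈ annulus a b, ‖f z‖ = ‖z‖ ^ α) :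
    ∃ n : ℤ, α = n := by
  set S := re ⁻¹' Ioo (Real.log a) (Real.log b)
  set G : ℂ → ℂ := fun w => f (exp w) / exp (α * w)
  have hG : DifferentiableOn ℂ G S := differentiableOn_comp_exp_div_exp ha (ha.trans hab) hf α
  have hGnorm : ∀ w ∈ S, ‖G w‖ = 1 := fun w hw => by
    rw [norm_div_exp_ofReal_mul, hnorm _ ((exp_mem_annulus_iff ha (ha.trans hab)).2 hw),
      norm_exp, ← Real.exp_mul, mul_comm, div_self (Real.exp_pos _).ne']
  set w₀ : ℂ := ↑((Real.log a + Real.log b) / 2)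
  have hw₀ : w₀ ∈ S := by
    have := Real.log_lt_log ha hab
    simp only [S, w₀, mem_preimage, ofReal_re, mem_Ioo]
    constructor <;> linarith
  have hconst := eqOn_of_isPreconnected_of_isMaxOn_norm
    (convex_re_preimage_Ioo _ _).isPreconnected (isOpen_Ioo.preimage continuous_re) hG hw₀
    fun w hw => by simp [hGnorm w hw, hGnorm w₀ hw₀]
  have hper : G (w₀ + 2 * π * I) = G w₀ / exp (α * (2 * π * I)) := by
    simp only [G]
    rw [exp_periodic w₀, mul_add, exp_add, div_div]
  have hone : exp (α * (2 * π * I)) = 1 := by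
    have hG₀ : G w₀ ≠ 0 := fun h0 => by simpa [h0] using hGnorm w₀ hw₀
    have h := hconst (show w₀ + 2 * π * I ∈ S by simpa [S] using hw₀)
    rwa [hper, Function.const_apply, div_eq_iff (exp_ne_zero _), eq_comm, mul_eq_left₀ hG₀] at h
  obtain ⟨n, hn⟩ := exp_eq_one_iff.1 hone
  exact ⟨n, by exact_mod_cast mul_right_cancel₀ two_pi_I_ne_zero hn⟩

theorem norm_eq_rpow_of_tendsto {f : ℂ → ℂ} {ρ ρ' : ℝ} (hρ : 1 < ρ) (hρ' : 1 < ρ')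
    (hf : DifferentiableOn ℂ f (annulus 1 ρ)) (hfm : MapsTo f (annulus 1 ρ) (annulus 1 ρ'))
    (hin : Tendsto (‖f ·‖) (innerEdge 1) (𝓝 1)) (hout : Tendsto (‖f ·‖) (outerEdge ρ) (𝓝 ρ'))
    {z : ℂ} (hz : z ∈ annulus 1 ρ) : ‖f z‖ = ‖z‖ ^ (Real.log ρ' / Real.log ρ) := by
  set L := Real.log ρ
  set α := Real.log ρ' / L
  have hL : 0 < L := Real.log_pos hρ
  have hα : 0 < α := div_pos (Real.log_pos hρ') hL
  have hαL : Real.exp (α * L) = ρ' := by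
    rw [div_mul_cancel₀ _ hL.ne', Real.exp_log (by linarith)]
  -- `G` is `f z / z ^ α` in the coordinate `z = exp w`
  set G : ℂ → ℂ := fun w => f (exp w) / exp (α * w)
  have hG : DifferentiableOn ℂ G (re ⁻¹' Ioo 0 L) := by
    simpa using differentiableOn_comp_exp_div_exp one_pos (by linarith) hf α
  have hbounds : ∀ w ∈ re ⁻¹' Ioo 0 L, 1 < ‖f (exp w)‖ ∧ ‖f (exp w)‖ < ρ' ∧
      1 < Real.exp (α * w.re) ∧ Real.exp (α * w.re) < ρ' := fun w hw => by
    have hfw := hfm ((exp_mem_annulus_iff one_pos (by linarith)).2 (by rwa [Real.log_one]))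
    exact ⟨hfw.1, hfw.2, Real.one_lt_exp_iff.2 (mul_pos hα hw.1),
      hαL ▸ Real.exp_lt_exp.2 (mul_lt_mul_of_pos_left hw.2 hα)⟩
  have hexp₀ : Tendsto exp (comap re (𝓝[>] 0)) (innerEdge 1) := by
    simpa using tendsto_exp_comap_re_nhdsGT 0
  have hexpL : Tendsto exp (comap re (𝓝[<] L)) (outerEdge ρ) := by
    simpa [L, Real.exp_log (by linarith : 0 < ρ)] using tendsto_exp_comap_re_nhdsLT L
  have hz₀ : z ≠ 0 := by
    rintro rfl
    exact absurd hz.1 (by simp)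
  have hw : log z ∈ re ⁻¹' Ioo 0 L := by
    rw [mem_preimage, log_re]
    exact ⟨Real.log_pos hz.1, Real.log_lt_log (by linarith [hz.1]) hz.2⟩
  have hGz : ‖G (log z)‖ = 1 := by
    refine norm_eq_one_of_tendsto_strip hG (fun w hw => ?_) ⟨ρ', fun w hw => ?_⟩
      (by simpa [G] using tendsto_norm_comp_exp_div_exp α nhdsWithin_le_nhds (hin.comp hexp₀))
      (by simpa [G, hαL, (by linarith : ρ' ≠ 0)] using
        tendsto_norm_comp_exp_div_exp α nhdsWithin_le_nhds (hout.comp hexpL)) hw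
    · exact div_ne_zero (norm_pos_iff.1 (one_pos.trans (hbounds w hw).1)) (exp_ne_zero _)
    · obtain ⟨h₁, h₂, h₃, h₄⟩ := hbounds w hw
      rw [norm_div_exp_ofReal_mul, inv_div, div_le_iff₀ (by linarith), div_le_iff₀ (by linarith)]
      constructor <;> nlinarith
  rwa [norm_div_exp_ofReal_mul, exp_log hz₀, div_eq_one_iff_eq (Real.exp_pos _).ne', log_re,
    mul_comm, ← Real.rpow_def_of_pos (norm_pos_iff.2 hz₀)] at hGz

theorem le_of_tendsto_norm {f : ℂ → ℂ} {ρ ρ' : ℝ} (hρ : 1 < ρ) (hρ' : 1 < ρ')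
    (hf : DifferentiableOn ℂ f (annulus 1 ρ)) (hfm : MapsTo f (annulus 1 ρ) (annulus 1 ρ'))
    (hin : Tendsto (‖f ·‖) (innerEdge 1) (𝓝 1)) (hout : Tendsto (‖f ·‖) (outerEdge ρ) (𝓝 ρ')) :
    ρ ≤ ρ' := by
  obtain ⟨n, hn⟩ := exists_int_eq_of_norm_eq_rpow one_pos hρ hf fun z hz =>
    norm_eq_rpow_of_tendsto hρ hρ' hf hfm hin hout hz
  have hn₀ : (0 : ℝ) < n := hn ▸ div_pos (Real.log_pos hρ') (Real.log_pos hρ)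
  rw [← Real.log_le_log_iff (by linarith) (by linarith), ← one_le_div (Real.log_pos hρ), hn]
  exact_mod_cast Int.cast_pos.1 hn₀

structure IsBiholomorphicPair (f g : ℂ → ℂ) (s t : Set ℂ) : Prop where
  differentiableOn : DifferentiableOn ℂ f s
  differentiableOn_symm : DifferentiableOn ℂ g t
  mapsTo : MapsTo f s t
  mapsTo_symm : MapsTo g t s
  invOn : InvOn g f s t

namespace IsBiholomorphicPair

variable {f g f' g' : ℂ → ℂ} {s t u : Set ℂ}

lemma symm (h : IsBiholomorphicPair f g s t) : IsBiholomorphicPair g f t s :=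
  ⟨h.differentiableOn_symm, h.differentiableOn, h.mapsTo_symm, h.mapsTo, h.invOn.symm⟩

lemma comp (h : IsBiholomorphicPair f g s t) (h' : IsBiholomorphicPair f' g' t u) :
    IsBiholomorphicPair (f' ∘ f) (g ∘ g') s u :=
  ⟨h'.differentiableOn.comp h.differentiableOn h.mapsTo,
    h.differentiableOn_symm.comp h'.differentiableOn_symm h'.mapsTo_symm,
    h'.mapsTo.comp h.mapsTo, h.mapsTo_symm.comp h'.mapsTo_symm,
    h.invOn.comp h'.invOn h.mapsTo h'.mapsTo_symm⟩

theorem tendsto_edges {a b a' b' : ℝ}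
    (h : IsBiholomorphicPair f g (annulus a b) (annulus a' b')) (ha : 0 < a) (hab : a < b)
    (ha' : 0 < a') (hab' : a' < b') :
    (Tendsto f (innerEdge a) (innerEdge a') ∧ Tendsto f (outerEdge b) (outerEdge b')) ∨
      (Tendsto f (innerEdge a) (outerEdge b') ∧ Tendsto f (outerEdge b) (innerEdge a')) := by
  have hf := tendsto_innerEdge_sup_outerEdge_of_leftInvOn hab h.differentiableOn_symm.continuousOn
    h.mapsTo_symm h.mapsTo h.invOn.1
  have hg := tendsto_innerEdge_sup_outerEdge_of_leftInvOn hab' h.differentiableOn.continuousOn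
    h.mapsTo h.mapsTo_symm h.invOn.2
  -- `f ∘ g = id` near the edges of the target, so no limit of `f` can miss one of its edges
  have hcover : ∀ {L}, Tendsto f (innerEdge a ⊔ outerEdge b) L →
      innerEdge a' ⊔ outerEdge b' ≤ L := fun hL =>
    tendsto_id'.1 <| (hL.comp hg).congr' <|
      eventuallyEq_of_mem (annulus_mem_innerEdge_sup_outerEdge hab') fun _ hw => h.invOn.2 hw
  have hdisj := disjoint_innerEdge_outerEdge hab'
  have := innerEdge_neBot ha'.le
  have := outerEdge_neBot (ha'.trans hab')
  rcases (hf.mono_left le_sup_left).innerEdge_or_outerEdge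
    (innerEdge_exists_isPreconnected_subset ha) (annulus_mem_innerEdge hab)
    h.differentiableOn.continuousOn hab' with hi | hi <;>
  rcases (hf.mono_left le_sup_right).innerEdge_or_outerEdge
    (outerEdge_exists_isPreconnected_subset (ha.trans hab)) (annulus_mem_outerEdge hab)
    h.differentiableOn.continuousOn hab' with ho | ho
  · exact absurd (hdisj.symm.eq_bot_of_le (le_sup_right.trans (hcover (tendsto_sup.2 ⟨hi, ho⟩))))
      (NeBot.ne inferInstance)
  · exact .inl ⟨hi, ho⟩
  · exact .inr ⟨hi, ho⟩
  · exact absurd (hdisj.eq_bot_of_le (le_sup_left.trans (hcover (tendsto_sup.2 ⟨hi, ho⟩))))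
      (NeBot.ne inferInstance)

theorem le_of_annulus_one {ρ ρ' : ℝ} (hρ : 1 < ρ) (hρ' : 1 < ρ')
    (h : IsBiholomorphicPair f g (annulus 1 ρ) (annulus 1 ρ')) : ρ ≤ ρ' := by
  have hρ'₀ : 0 < ρ' := one_pos.trans hρ'
  rcases h.tendsto_edges one_pos hρ one_pos hρ' with ⟨hin, hout⟩ | ⟨hin, hout⟩
  · exact le_of_tendsto_norm hρ hρ' h.differentiableOn h.mapsTo
      (tendsto_norm_of_tendsto_innerEdge hin) (tendsto_norm_of_tendsto_outerEdge hout)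
  -- `w ↦ ρ' / w` exchanges the two edges of `annulus 1 ρ'`
  have hnorm : ∀ z, ‖(ρ' : ℂ) / f z‖ = ρ' / ‖f z‖ := fun z => by
    rw [norm_div, norm_real, Real.norm_of_nonneg hρ'₀.le]
  refine le_of_tendsto_norm (f := fun z => (ρ' : ℂ) / f z) hρ hρ'
    ((differentiableOn_const _).div h.differentiableOn fun z hz hfz => ?_)
    (fun z hz => div_mem_annulus_one hρ'₀ (h.mapsTo hz)) ?_ ?_
  · exact absurd (h.mapsTo hz).1 (by simp [hfz])
  · simp only [hnorm]
    have := (tendsto_const_nhds (x := ρ')).div (tendsto_norm_of_tendsto_outerEdge hin) hρ'₀.ne'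
    rwa [div_self hρ'₀.ne'] at this
  · simp only [hnorm]
    have := (tendsto_const_nhds (x := ρ')).div (tendsto_norm_of_tendsto_innerEdge hout) one_ne_zero
    rwa [div_one] at this

end IsBiholomorphicPair

lemma isBiholomorphicPair_ofReal_mul {c : ℝ} (hc : 0 < c) (a b : ℝ) :
    IsBiholomorphicPair ((c : ℂ) * ·) ((c : ℂ)⁻¹ * ·) (annulus a b) (annulus (c * a) (c * b)) := by
  have hc' : (c : ℂ) ≠ 0 := ofReal_ne_zero.2 hc.ne'
  refine ⟨(differentiable_id.const_mul _).differentiableOn,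
    (differentiable_id.const_mul _).differentiableOn, fun z hz => ?_, fun z hz => ?_,
    fun z _ => inv_mul_cancel_left₀ hc' z, fun z _ => mul_inv_cancel_left₀ hc' z⟩
  · simp only [annulus, mem_ofPred_eq, norm_ofReal_mul hc.le] at hz ⊢
    exact ⟨mul_lt_mul_of_pos_left hz.1 hc, mul_lt_mul_of_pos_left hz.2 hc⟩
  · rw [← ofReal_inv]
    simp only [annulus, mem_ofPred_eq, norm_ofReal_mul (inv_pos.2 hc).le] at hz ⊢
    constructor
    · rw [lt_inv_mul_iff₀ hc]; exact hz.1
    · rw [inv_mul_lt_iff₀ hc]; exact hz.2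

lemma exists_isBiholomorphicPair_annulus_one {a : ℝ} (ha : 0 < a) (b : ℝ) :
    ∃ f g, IsBiholomorphicPair f g (annulus 1 (b / a)) (annulus a b) :=
  ⟨_, _, by
    simpa [mul_div_cancel₀ _ ha.ne'] using isBiholomorphicPair_ofReal_mul ha 1 (b / a)⟩

/-- Two annuli `{r < |z| < R}` and `{r' < |z| < R'}` are biholomorphically equivalent
if and only if they have the same modulus, i.e. `R/r = R'/r'`. -/
theorem annuli_biholomorphic_iff_same_modulus (r R r' R' : ℝ)
    (hr : 0 < r) (hrR : r < R) (hr' : 0 < r') (hrR' : r' < R') :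
    (∃ f g : ℂ → ℂ,
      DifferentiableOn ℂ f {z : ℂ | r < ‖z‖ ∧ ‖z‖ < R} ∧
      DifferentiableOn ℂ g {z : ℂ | r' < ‖z‖ ∧ ‖z‖ < R'} ∧
      Set.MapsTo f {z : ℂ | r < ‖z‖ ∧ ‖z‖ < R}
        {z : ℂ | r' < ‖z‖ ∧ ‖z‖ < R'} ∧
      Set.MapsTo g {z : ℂ | r' < ‖z‖ ∧ ‖z‖ < R'}
        {z : ℂ | r < ‖z‖ ∧ ‖z‖ < R} ∧
      (∀ z ∈ {z : ℂ | r < ‖z‖ ∧ ‖z‖ < R}, g (f z) = z) ∧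
      (∀ z ∈ {z : ℂ | r' < ‖z‖ ∧ ‖z‖ < R'}, f (g z) = z)) ↔
    R / r = R' / r' := by
  obtain ⟨φ, ψ, hφ⟩ := exists_isBiholomorphicPair_annulus_one hr R
  obtain ⟨φ', ψ', hφ'⟩ := exists_isBiholomorphicPair_annulus_one hr' R'
  constructor
  · rintro ⟨f, g, hf, hg, hfm, hgm, hgf, hfg⟩
    have h := (hφ.comp ⟨hf, hg, hfm, hgm, hgf, hfg⟩).comp hφ'.symm
    have hρ := (one_lt_div hr).2 hrR
    have hρ' := (one_lt_div hr').2 hrR'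
    exact le_antisymm (h.le_of_annulus_one hρ hρ') (h.symm.le_of_annulus_one hρ' hρ)
  · intro hmod
    rw [hmod] at hφ
    obtain ⟨hf, hg, hfm, hgm, hgf, hfg⟩ := hφ.symm.comp hφ'
    exact ⟨_, _, hf, hg, hfm, hgm, hgf, hfg⟩
end

section
/- Let $0 < \kappa < 1/2$, $b > 0$ with $b^2 < (1-2\kappa)/(2\kappa)$, $k_1 \in [-\pi,\pi]$, and $a \in \mathbb{R}$ with $|a| = b$ small enough that $\cosh a \leq 1 + b^2$ and $|\sinh a| \leq 2b$. Define the complex number $w := 1 - \kappa + \kappa \cos k_1 \cosh a - i \kappa \sin k_1 \sinh a$, and write $w = \rho e^{i\beta}$ with $\rho = |w|$ and $\beta = \arg w$. Then $\rho \leq 1 + \kappa[(1+\pi^2) b^2 - k_1^2/\pi^2]$ and $|\beta| \leq \frac{4\kappa}{1-2\kappa}\, |k_1|\, b$. -/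
/-!
The real part `x = 1 - κ + κ cos k₁ cosh a` is at most `1 - 2κk₁²/π² + κb²`, by the concavity
bound `cos k₁ ≤ 1 - 2k₁²/π²` on `[-π, π]`, and at least `(1 - 2κ)/2 > 0`, because
`κ b² < (1 - 2κ)/2`. The imaginary part has modulus `|y| ≤ 2κ|k₁|b ≤ κ(π²b² + k₁²/π²)`.
Then `ρ ≤ x + |y|` gives the modulus bound, and since `w` lies in the right half-plane,
`|β| ≤ |tan β| = |y|/x` gives the argument bound.
-/

open Real

lemma Real.abs_le_abs_tan {x : ℝ} (hx : |x| < π / 2) : |x| ≤ |tan x| :=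
  calc |x| ≤ tan |x| := le_tan (abs_nonneg x) hx
    _ ≤ |tan x| := by
      rcases abs_choice x with h | h <;> rw [h]
      · exact le_abs_self _
      · rw [tan_neg]
        exact neg_le_abs _

namespace Complex

lemma abs_arg_le_abs_im_div_re {z : ℂ} (hz : 0 < z.re) : |arg z| ≤ |z.im| / z.re :=
  calc |arg z| ≤ |Real.tan (arg z)| :=
        Real.abs_le_abs_tan (abs_arg_lt_pi_div_two_iff.mpr (Or.inl hz))
    _ = |z.im| / z.re := by rw [tan_arg, abs_div, abs_of_pos hz]

lemma norm_ofReal_sub_I_mul_ofReal_le (x y : ℝ) : ‖(x : ℂ) - I * y‖ ≤ |x| + |y| := by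
  simpa using norm_le_abs_re_add_abs_im ((x : ℂ) - I * y)

lemma abs_arg_ofReal_sub_I_mul_ofReal_le {x : ℝ} (hx : 0 < x) (y : ℝ) :
    |arg ((x : ℂ) - I * y)| ≤ |y| / x := by
  simpa using abs_arg_le_abs_im_div_re (z := (x : ℂ) - I * y) (by simpa using hx)

end Complex

section SymbolBounds

variable {κ : ℝ} (hκ : 0 ≤ κ)
include hκ

lemma one_sub_add_mul_cos_mul_cosh_le {k : ℝ} (hk : |k| ≤ π) (a : ℝ) :
    1 - κ + κ * cos k * cosh a ≤ 1 - 2 * κ * (k ^ 2 / π ^ 2) + κ * (cosh a - 1) := by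
  have hcos : cos k ≤ 1 - 2 * (k ^ 2 / π ^ 2) := by
    have := cos_le_one_sub_mul_cos_sq hk
    rwa [div_mul_eq_mul_div, mul_div_assoc] at this
  have hmul : cos k * cosh a ≤ 1 - 2 * (k ^ 2 / π ^ 2) + (cosh a - 1) := by
    nlinarith [cos_le_one k, one_le_cosh a]
  linarith [mul_le_mul_of_nonneg_left hmul hκ]

lemma one_sub_sub_mul_cosh_le (k a : ℝ) : 1 - κ - κ * cosh a ≤ 1 - κ + κ * cos k * cosh a := by
  have h : -cosh a ≤ cos k * cosh a := by nlinarith [neg_one_le_cos k, cosh_pos a]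
  linarith [mul_le_mul_of_nonneg_left h hκ]

lemma abs_mul_sin_mul_sinh_le (k a : ℝ) : |κ * sin k * sinh a| ≤ κ * |k| * |sinh a| := by
  rw [abs_mul, abs_mul, abs_of_nonneg hκ]
  gcongr ?_ * _
  exact mul_le_mul_of_nonneg_left abs_sin_le_abs hκ

end SymbolBounds

lemma two_mul_le_sq_mul_sq_add_sq_div_sq {c : ℝ} (hc : c ≠ 0) (u v : ℝ) :
    2 * u * v ≤ c ^ 2 * v ^ 2 + u ^ 2 / c ^ 2 := by
  have h := two_mul_le_add_sq (c * v) (u / c)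
  have : c * v * (u / c) = u * v := by field_simp
  rw [mul_assoc, this, mul_pow, div_pow] at h
  linarith

theorem B_complex_modulus_arg_bounds_general (κ b k1 a : ℝ)
    (hκ : 0 < κ) (hκ' : κ < 1/2) (hb : 0 < b)
    (hb2 : b^2 < (1 - 2*κ) / (2*κ))
    (hk1 : k1 ∈ Set.Icc (-Real.pi) Real.pi)
    (hcosh : Real.cosh a ≤ 1 + b^2)
    (hsinh : |Real.sinh a| ≤ 2 * b) :
    ‖(((((1 - κ + κ * Real.cos k1 * Real.cosh a : ℝ)) : ℂ)
        - Complex.I * ((κ * Real.sin k1 * Real.sinh a : ℝ) : ℂ)) : ℂ)‖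
      ≤ 1 + κ * ((1 + Real.pi^2) * b^2 - k1^2 / Real.pi^2) ∧
    |Complex.arg ((((1 - κ + κ * Real.cos k1 * Real.cosh a : ℝ)) : ℂ)
        - Complex.I * ((κ * Real.sin k1 * Real.sinh a : ℝ) : ℂ))|
      ≤ 4 * κ / (1 - 2*κ) * |k1| * b := by
  set x := 1 - κ + κ * cos k1 * cosh a
  set y := κ * sin k1 * sinh a
  have h12 : 0 < 1 - 2 * κ := by linarith
  have hκb : κ * b ^ 2 < (1 - 2 * κ) / 2 := by
    rw [lt_div_iff₀ (by positivity)] at hb2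
    linarith
  have hκcosh : κ * cosh a ≤ κ * (1 + b ^ 2) := mul_le_mul_of_nonneg_left hcosh hκ.le
  have hx_lower : (1 - 2 * κ) / 2 ≤ x := by
    linarith [one_sub_sub_mul_cosh_le hκ.le k1 a]
  have hx_upper : x ≤ 1 - 2 * κ * (k1 ^ 2 / π ^ 2) + κ * b ^ 2 := by
    linarith [one_sub_add_mul_cos_mul_cosh_le hκ.le (abs_le.mpr hk1) a]
  have hy : |y| ≤ 2 * κ * |k1| * b := by
    calc |y| ≤ κ * |k1| * |sinh a| := abs_mul_sin_mul_sinh_le hκ.le k1 a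
      _ ≤ κ * |k1| * (2 * b) := by gcongr
      _ = 2 * κ * |k1| * b := by ring
  have hx : 0 < x := by linarith
  constructor
  · have hamgm := two_mul_le_sq_mul_sq_add_sq_div_sq pi_ne_zero |k1| b
    rw [sq_abs] at hamgm
    calc ‖(x : ℂ) - Complex.I * y‖ ≤ x + |y| := by
          simpa [abs_of_pos hx] using Complex.norm_ofReal_sub_I_mul_ofReal_le x y
      _ ≤ 1 + κ * ((1 + π ^ 2) * b ^ 2 - k1 ^ 2 / π ^ 2) := by
          linarith [mul_le_mul_of_nonneg_left hamgm hκ.le]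
  · calc |Complex.arg ((x : ℂ) - Complex.I * y)| ≤ |y| / x :=
          Complex.abs_arg_ofReal_sub_I_mul_ofReal_le hx y
      _ ≤ 2 * κ * |k1| * b / ((1 - 2 * κ) / 2) :=
          div_le_div₀ (by positivity) hy (by positivity) hx_lower
      _ = 4 * κ / (1 - 2 * κ) * |k1| * b := by field_simp; ring

/-- Bounds on the modulus and argument of the analytic continuation
`w = B(k₁ + ia) = 1 - κ + κ cos k₁ cosh a - i κ sin k₁ sinh a`. -/
theorem B_complex_modulus_arg_bounds (κ b k1 a : ℝ)
    (hκ : 0 < κ) (hκ' : κ < 1/2) (hb : 0 < b)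
    (hb2 : b^2 < (1 - 2*κ) / (2*κ))
    (hk1 : k1 ∈ Set.Icc (-Real.pi) Real.pi)
    (ha : |a| = b)
    (hcosh : Real.cosh a ≤ 1 + b^2)
    (hsinh : |Real.sinh a| ≤ 2 * b) :
    ‖(((((1 - κ + κ * Real.cos k1 * Real.cosh a : ℝ)) : ℂ)
        - Complex.I * ((κ * Real.sin k1 * Real.sinh a : ℝ) : ℂ)) : ℂ)‖
      ≤ 1 + κ * ((1 + Real.pi^2) * b^2 - k1^2 / Real.pi^2) ∧
    |Complex.arg ((((1 - κ + κ * Real.cos k1 * Real.cosh a : ℝ)) : ℂ)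
        - Complex.I * ((κ * Real.sin k1 * Real.sinh a : ℝ) : ℂ))|
      ≤ 4 * κ / (1 - 2*κ) * |k1| * b :=
  B_complex_modulus_arg_bounds_general κ b k1 a hκ hκ' hb hb2 hk1 hcosh hsinh
end
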